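/- For all t with 0 ≤ t ≤ 1, the standard normal density and tail satisfy φ(t) ≤ (√(4+t²) − t) φ(t) ≤ G(t), where G(t) = 2(1 − Φ(t)); in particular G(t) ≥ φ(t) for 0 ≤ t ≤ 1. -/

import Mathlib

/-!
Birnbaum's bound: the function `h(x) = (√(4 + x²) − x) φ(x)` satisfies `h' ≥ −2φ`, because after
multiplying by `√(4 + x²)` this becomes `x (3 + x²) ≤ √(4 + x²) (1 + x²)`, and
`(4 + x²)(1 + x²)² − x²(3 + x²)² = 4`. Since `h → 0` at `+∞`, integrating over `(t, ∞)` gives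
`h(t) ≤ 2 ∫_t^∞ φ = G(t)`. The first inequality is `√(4 + t²) − t ≥ 1`, valid for `t ≤ 3/2`.
-/

noncomputable section

open MeasureTheory Real

/-- Standard normal density. -/
def gaussDensity (t : ℝ) : ℝ := Real.exp (-(t ^ 2) / 2) / Real.sqrt (2 * Real.pi)

/-- Standard normal CDF. -/
def Phi (t : ℝ) : ℝ := ∫ x in Set.Iic t, gaussDensity x

/-- Two-sided Gaussian tail function `G(t) = 2(1 − Φ(t))`. -/
def Gtail (t : ℝ) : ℝ := 2 * (1 - Phi t)

open Filter Topology Set ProbabilityTheory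

theorem le_integral_Ioi_of_neg_le_deriv {f f' g : ℝ → ℝ} {a : ℝ} (hcont : ContinuousOn f (Ici a))
    (hderiv : ∀ x ∈ Ioi a, HasDerivAt f (f' x) x) (hg : IntegrableOn g (Ioi a))
    (hle : ∀ x ∈ Ioi a, -g x ≤ f' x) (hf : Tendsto f atTop (𝓝 0)) :
    f a ≤ ∫ x in Ioi a, g x := by
  have hbound : ∀ b ≥ a, f a - f b ≤ ∫ x in a..b, g x := fun b hab =>
    calc f a - f b = -f b - -f a := by ring
      _ ≤ ∫ x in a..b, g x :=
        intervalIntegral.sub_le_integral_of_hasDeriv_right_of_le hab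
          (hcont.mono Icc_subset_Ici_self).neg
          (fun x hx => (hderiv x (Ioo_subset_Ioi_self hx)).neg.hasDerivWithinAt)
          (((integrableOn_Ici_iff_integrableOn_Ioi).mpr hg).mono_set Icc_subset_Ici_self)
          (fun x hx => neg_le.mp (hle x (Ioo_subset_Ioi_self hx)))
  have hlim : Tendsto (fun b => f a - f b) atTop (𝓝 (f a - 0)) := tendsto_const_nhds.sub hf
  rw [sub_zero] at hlim
  exact le_of_tendsto_of_tendsto hlim (intervalIntegral_tendsto_integral_Ioi a hg tendsto_id)
    ((eventually_ge_atTop a).mono hbound)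

theorem gaussDensity_eq_gaussianPDFReal : gaussDensity = gaussianPDFReal 0 1 := by
  ext x
  simp [gaussDensity, gaussianPDFReal, div_eq_inv_mul]

theorem integrable_gaussDensity : Integrable gaussDensity := by
  rw [gaussDensity_eq_gaussianPDFReal]; exact integrable_gaussianPDFReal 0 1

theorem integral_gaussDensity : ∫ x, gaussDensity x = 1 := by
  rw [gaussDensity_eq_gaussianPDFReal]; exact integral_gaussianPDFReal_eq_one 0 one_ne_zero

theorem Gtail_eq_two_mul_integral_Ioi (t : ℝ) : Gtail t = 2 * ∫ x in Ioi t, gaussDensity x := by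
  have := intervalIntegral.integral_Iic_add_Ioi (b := t) integrable_gaussDensity.integrableOn
    integrable_gaussDensity.integrableOn
  rw [integral_gaussDensity] at this
  rw [Gtail, Phi, ← this]; ring

theorem gaussDensity_nonneg (x : ℝ) : 0 ≤ gaussDensity x := by
  rw [gaussDensity]; positivity

theorem hasDerivAt_gaussDensity (x : ℝ) : HasDerivAt gaussDensity (-x * gaussDensity x) x := by
  have h : HasDerivAt (fun y : ℝ => -(y ^ 2) / 2) (-x) x :=
    ((hasDerivAt_pow 2 x).neg.div_const 2).congr_deriv (by push_cast; ring)
  exact (h.exp.div_const (√(2 * π))).congr_deriv (by rw [gaussDensity]; ring)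

theorem tendsto_gaussDensity_atTop : Tendsto gaussDensity atTop (𝓝 0) := by
  have h : Tendsto (fun x : ℝ => -(x ^ 2) / 2) atTop atBot :=
    (tendsto_neg_atTop_atBot.comp (tendsto_pow_atTop two_ne_zero)).atBot_div_const two_pos
  unfold gaussDensity
  simpa only [Function.comp_def, zero_div] using (tendsto_exp_atBot.comp h).div_const (√(2 * π))

theorem mul_three_add_sq_le_sqrt_four_add_sq_mul (x : ℝ) :
    x * (3 + x ^ 2) ≤ √(4 + x ^ 2) * (1 + x ^ 2) := by
  have hs : √(4 + x ^ 2) ^ 2 = 4 + x ^ 2 := sq_sqrt (by positivity)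
  have hsq : (x * (3 + x ^ 2)) ^ 2 ≤ (√(4 + x ^ 2) * (1 + x ^ 2)) ^ 2 := by
    rw [mul_pow (√(4 + x ^ 2)), hs]; nlinarith [sq_nonneg x]
  exact (abs_le_of_sq_le_sq' hsq (by positivity)).2

theorem hasDerivAt_sqrt_four_add_sq (x : ℝ) :
    HasDerivAt (fun y => √(4 + y ^ 2)) (x / √(4 + x ^ 2)) x := by
  have h := ((hasDerivAt_pow 2 x).const_add 4).sqrt (by positivity)
  exact h.congr_deriv (by push_cast; ring)

def birnbaumBound (x : ℝ) : ℝ := (√(4 + x ^ 2) - x) * gaussDensity x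

theorem hasDerivAt_birnbaumBound (x : ℝ) :
    HasDerivAt birnbaumBound
      ((x / √(4 + x ^ 2) - 1 - x * (√(4 + x ^ 2) - x)) * gaussDensity x) x :=
  (((hasDerivAt_sqrt_four_add_sq x).sub (hasDerivAt_id x)).mul
    (hasDerivAt_gaussDensity x)).congr_deriv (by simp only [Pi.sub_apply, id_eq]; ring)

theorem neg_two_mul_gaussDensity_le_deriv_birnbaumBound (x : ℝ) :
    -(2 * gaussDensity x) ≤ (x / √(4 + x ^ 2) - 1 - x * (√(4 + x ^ 2) - x)) * gaussDensity x := by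
  have hs : 0 < √(4 + x ^ 2) := sqrt_pos.2 (by positivity)
  have hs2 : √(4 + x ^ 2) ^ 2 = 4 + x ^ 2 := sq_sqrt (by positivity)
  have key : -2 ≤ x / √(4 + x ^ 2) - 1 - x * (√(4 + x ^ 2) - x) := by
    rw [div_sub' hs.ne', div_sub' hs.ne', le_div_iff₀ hs]
    have hxs : x * √(4 + x ^ 2) ^ 2 = x * (4 + x ^ 2) := by rw [hs2]
    nlinarith [mul_three_add_sq_le_sqrt_four_add_sq_mul x]
  nlinarith [gaussDensity_nonneg x]

theorem sqrt_four_add_sq_sub_self_nonneg (x : ℝ) : 0 ≤ √(4 + x ^ 2) - x :=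
  sub_nonneg.2 ((le_abs_self x).trans (abs_le_sqrt (by linarith)))

theorem tendsto_birnbaumBound_atTop : Tendsto birnbaumBound atTop (𝓝 0) := by
  have hupper : ∀ x ≥ 0, √(4 + x ^ 2) - x ≤ 2 := fun x hx => by
    rw [sub_le_iff_le_add, sqrt_le_iff]; constructor <;> nlinarith
  refine squeeze_zero' (Eventually.of_forall fun x => ?_) ?_
    (by simpa using tendsto_gaussDensity_atTop.const_mul 2)
  · exact mul_nonneg (sqrt_four_add_sq_sub_self_nonneg x) (gaussDensity_nonneg x)
  · filter_upwards [eventually_ge_atTop 0] with x hx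
    exact mul_le_mul_of_nonneg_right (hupper x hx) (gaussDensity_nonneg x)

theorem birnbaumBound_le_Gtail (t : ℝ) : birnbaumBound t ≤ Gtail t := by
  rw [Gtail_eq_two_mul_integral_Ioi, ← integral_const_mul]
  exact le_integral_Ioi_of_neg_le_deriv
    (fun x _ => (hasDerivAt_birnbaumBound x).continuousAt.continuousWithinAt)
    (fun x _ => hasDerivAt_birnbaumBound x) (integrable_gaussDensity.const_mul 2).integrableOn
    (fun x _ => neg_two_mul_gaussDensity_le_deriv_birnbaumBound x) tendsto_birnbaumBound_atTop

theorem one_le_sqrt_four_add_sq_sub_self {t : ℝ} (ht : t ≤ 3 / 2) : 1 ≤ √(4 + t ^ 2) - t := by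
  rw [le_sub_iff_add_le]
  exact le_sqrt_of_sq_le (by nlinarith)

theorem gaussDensity_le_Gtail_general (t : ℝ) (ht1 : t ≤ 1) :
    gaussDensity t ≤ (Real.sqrt (4 + t ^ 2) - t) * gaussDensity t ∧
      (Real.sqrt (4 + t ^ 2) - t) * gaussDensity t ≤ Gtail t ∧
      gaussDensity t ≤ Gtail t := by
  have hφ : gaussDensity t ≤ (√(4 + t ^ 2) - t) * gaussDensity t :=
    le_mul_of_one_le_left (gaussDensity_nonneg t) (one_le_sqrt_four_add_sq_sub_self (by linarith))
  have hG : (√(4 + t ^ 2) - t) * gaussDensity t ≤ Gtail t := birnbaumBound_le_Gtail t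
  exact ⟨hφ, hG, hφ.trans hG⟩

/-- STATEMENT 11: for `0 ≤ t ≤ 1`,
`φ(t) ≤ (√(4+t²) − t)·φ(t) ≤ G(t)`; in particular `φ(t) ≤ G(t)`. -/
theorem gaussDensity_le_Gtail (t : ℝ) (ht0 : 0 ≤ t) (ht1 : t ≤ 1) :
    gaussDensity t ≤ (Real.sqrt (4 + t ^ 2) - t) * gaussDensity t ∧
      (Real.sqrt (4 + t ^ 2) - t) * gaussDensity t ≤ Gtail t ∧
      gaussDensity t ≤ Gtail t :=
  gaussDensity_le_Gtail_general t ht1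

end
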